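/- Let A be an algebra. If A satisfies β ∩ (T∘S) ⊆ (T ∩ (S ∘ (T∩β) ∘ S))* ∘ S for every congruence β and all tolerances T, S, then A satisfies β ∩ (T∘γ) ⊆ γ ∨ (T∩β)* for all congruences β, γ and every tolerance T, where γ ∨ D denotes the smallest congruence containing both γ and D. -/

import Mathlib

open FirstOrder Language

universe u

/-- A binary relation on a structure `A` is compatible (admissible) if it is preserved
by every operation (function symbol) of the language. -/
def Compatible (L : Language) {A : Type u} [L.Structure A] (R : A → A → Prop) : Prop :=
  ∀ (n : ℕ) (f : L.Functions n) (a b : Fin n → A),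
    (∀ i, R (a i) (b i)) → R (Structure.funMap f a) (Structure.funMap f b)

/-- `(x, y; z, w) ∈ M(R, S)`: there is a term `t` and tuples `a R a'`, `b S b'` with
`x = t(a,b)`, `y = t(a,b')`, `z = t(a',b)`, `w = t(a',b')`. -/
def InM (L : Language) {A : Type u} [L.Structure A] (R S : A → A → Prop)
    (x y z w : A) : Prop :=
  ∃ (n m : ℕ) (t : L.Term (Fin n ⊕ Fin m)) (a a' : Fin n → A) (b b' : Fin m → A),
    (∀ i, R (a i) (a' i)) ∧ (∀ j, S (b j) (b' j)) ∧
      x = t.realize (Sum.elim a b) ∧ y = t.realize (Sum.elim a b') ∧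
      z = t.realize (Sum.elim a' b) ∧ w = t.realize (Sum.elim a' b')

/-- `[R, S | 1]`: the transitive closure of `{(z,w) : (x,x;z,w) ∈ M(R,S) for some x}`. -/
def comm1 (L : Language) {A : Type u} [L.Structure A] (R S : A → A → Prop) :
    A → A → Prop :=
  Relation.TransGen (fun z w => ∃ x, InM L R S x x z w)

/-- Relational composition. -/
def rcomp {A : Type u} (R S : A → A → Prop) : A → A → Prop :=
  fun a c => ∃ b, R a b ∧ S b c

/-- Converse of a relation. -/
def rconv {A : Type u} (R : A → A → Prop) : A → A → Prop := fun a b => R b a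

/-- Intersection of relations. -/
def rinter {A : Type u} (R S : A → A → Prop) : A → A → Prop := fun a b => R a b ∧ S a b

/-- A congruence: a compatible equivalence relation. -/
def IsCongruence (L : Language) {A : Type u} [L.Structure A] (θ : A → A → Prop) : Prop :=
  Equivalence θ ∧ Compatible L θ

/-- A tolerance: a reflexive symmetric compatible relation. -/
def IsTolerance (L : Language) {A : Type u} [L.Structure A] (T : A → A → Prop) : Prop :=
  Reflexive T ∧ Symmetric T ∧ Compatible L T

/-- `Cg R`: the smallest congruence containing `R` (intersection of all congruences ⊇ R). -/
def Cg (L : Language) {A : Type u} [L.Structure A] (R : A → A → Prop) : A → A → Prop :=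
  fun a b => ∀ θ : A → A → Prop, IsCongruence L θ → (∀ x y, R x y → θ x y) → θ a b

/-- `R°`: the smallest tolerance containing `R`. -/
def tolC (L : Language) {A : Type u} [L.Structure A] (R : A → A → Prop) : A → A → Prop :=
  fun a b => ∀ T : A → A → Prop, IsTolerance L T → (∀ x y, R x y → T x y) → T a b

/-- `K(R,S;V) = {(z,w) : ∃ x y, (x,y;z,w) ∈ M(R,S) ∧ x V y}`. -/
def Kop (L : Language) {A : Type u} [L.Structure A] (R S V : A → A → Prop) :
    A → A → Prop :=
  fun z w => ∃ x y, InM L R S x y z w ∧ V x y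

/-- The join `γ ∨ D`: the smallest congruence containing both `γ` and `D`. -/
def cgJoin (L : Language) {A : Type u} [L.Structure A] (γ D : A → A → Prop) :
    A → A → Prop :=
  fun a b => ∀ θ : A → A → Prop, IsCongruence L θ → (∀ x y, γ x y → θ x y) →
    (∀ x y, D x y → θ x y) → θ a b

variable {L : Language} {A : Type u} [L.Structure A]

/-!
Apply the hypothesis with `S := γ`, a congruence being in particular a tolerance: a pair in
`β ∩ (T ∘ γ)` lies in `(T ∩ (γ ∘ (T ∩ β) ∘ γ))* ∘ γ`. Every factor of this relation is contained
in `γ` or in `(T ∩ β)*`, so the whole relation lies in any congruence containing both.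
-/

theorem IsCongruence.isTolerance {θ : A → A → Prop} (hθ : IsCongruence L θ) :
    IsTolerance L θ :=
  ⟨hθ.1.refl, fun _ _ => hθ.1.symm, hθ.2⟩

namespace cgJoin

variable {γ D : A → A → Prop} {a b c : A}

theorem of_left (h : γ a b) : cgJoin L γ D a b :=
  fun _ _ hγθ _ => hγθ a b h

theorem of_right (h : D a b) : cgJoin L γ D a b :=
  fun _ _ _ hDθ => hDθ a b h

theorem trans (hab : cgJoin L γ D a b) (hbc : cgJoin L γ D b c) : cgJoin L γ D a c :=
  fun θ hθ hγθ hDθ => hθ.1.trans (hab θ hθ hγθ hDθ) (hbc θ hθ hγθ hDθ)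

instance : IsTrans A (cgJoin L γ D) :=
  ⟨fun _ _ _ => trans⟩

theorem of_rcomp_rcomp {R : A → A → Prop} (h : rcomp γ (rcomp R γ) a b) :
    cgJoin L γ (Relation.TransGen R) a b := by
  obtain ⟨u, hau, v, huv, hvb⟩ := h
  exact (of_left hau).trans ((of_right (Relation.TransGen.single huv)).trans (of_left hvb))

end cgJoin

theorem stmt14
    (h : ∀ β : A → A → Prop, IsCongruence L β →
      ∀ T S : A → A → Prop, IsTolerance L T → IsTolerance L S →
        ∀ a b, β a b ∧ rcomp T S a b →
          rcomp (Relation.TransGen (rinter T (rcomp S (rcomp (rinter T β) S)))) S a b) :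
    ∀ β γ : A → A → Prop, IsCongruence L β → IsCongruence L γ →
      ∀ T : A → A → Prop, IsTolerance L T →
        ∀ a b, β a b ∧ rcomp T γ a b →
          cgJoin L γ (Relation.TransGen (rinter T β)) a b := by
  intro β γ hβ hγ T hT a b hab
  obtain ⟨c, hac, hcb⟩ := h β hβ T γ hT hγ.isTolerance a b hab
  have hac' : cgJoin L γ (Relation.TransGen (rinter T β)) a c :=
    Relation.transGen_minimal (r' := cgJoin L γ (Relation.TransGen (rinter T β)))
      (fun _ _ hxy => cgJoin.of_rcomp_rcomp hxy.2) a c hac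
  exact hac'.trans (cgJoin.of_left hcb)
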